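/- Let ℓ ≥ 4 be an integer and K a field. Then every K-isomorphism class of pairs (E, P), with E an elliptic curve over K and P ∈ E(K) a torsion point of order ℓ, contains a unique model in Tate normal form: there exist unique c ∈ K and b ∈ K^× such that the Weierstrass curve E_{(b,c)} : y² + (1−c)xy − by = x³ − bx² is nonsingular and (E, P) is K-isomorphic to (E_{(b,c)}, (0,0)). -/

import Mathlib

/-- The Tate normal form `E_{(b,c)} : y² + (1−c)xy − by = x³ − bx²` as a Weierstrass curve
(with marked point `(0, 0)`). -/
def tateNormalForm {K : Type*} [CommRing K] (b c : K) : WeierstrassCurve.Affine K :=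
  { a₁ := 1 - c, a₂ := -b, a₃ := -b, a₄ := 0, a₆ := 0 }

/-! Moving `P = (x₀, y₀)` to the origin and its tangent line to `y = 0` kills `a₄` and `a₆`.
The new `a₃ = y₀ - negY x₀ y₀` vanishes iff `2P = 0`, and the new `a₂ = x(P) - x(2P)` vanishes
only if `2P = ±P`, i.e. `P = 0` or `3P = 0`; so for `ℓ ≥ 4` the scaling `u = a₃ / a₂`
makes `a₂ = a₃ = -b`.
Uniqueness: a change of variables fixing `(0, 0)` between two Tate normal forms with `b ≠ 0` has
`s = 0` (compare `a₄`) and then `u = 1` (compare `a₂` with `a₃`). -/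

namespace WeierstrassCurve

variable {K : Type*} [Field K]

lemma eq_of_variableChange_smul_tateNormalForm {b c b' c' : K} (hb : b ≠ 0)
    {D : VariableChange K} (hr : D.r = 0) (ht : D.t = 0)
    (hD : D • tateNormalForm b c = tateNormalForm b' c') : b = b' ∧ c = c' := by
  have h₁ := congrArg a₁ hD
  have h₂ := congrArg a₂ hD
  have h₃ := congrArg a₃ hD
  have h₄ := congrArg a₄ hD
  simp only [variableChange_a₁, variableChange_a₂, variableChange_a₃, variableChange_a₄,
    tateNormalForm, hr, ht] at h₁ h₂ h₃ h₄
  have hv : ((D.u⁻¹ : Kˣ) : K) ≠ 0 := Units.ne_zero _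
  have hs : D.s = 0 := by
    have : ((D.u⁻¹ : Kˣ) : K) ^ 4 * D.s * b = 0 := by linear_combination h₄
    simpa [hv, hb] using this
  rw [hs] at h₁ h₂
  have hv₁ : ((D.u⁻¹ : Kˣ) : K) = 1 := by
    have : ((D.u⁻¹ : Kˣ) : K) ^ 2 * (((D.u⁻¹ : Kˣ) : K) - 1) * b = 0 := by
      linear_combination h₂ - h₃
    simpa [hv, hb, sub_eq_zero] using this
  rw [hv₁] at h₁ h₂
  constructor
  · linear_combination -h₂
  · linear_combination -h₁

lemma eq_of_smul_eq_tateNormalForm {W : WeierstrassCurve K} {C C' : VariableChange K}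
    {b c b' c' : K} (hb : b ≠ 0) (hr : C.r = C'.r) (ht : C.t = C'.t)
    (h : C • W = tateNormalForm b c) (h' : C' • W = tateNormalForm b' c') : b = b' ∧ c = c' := by
  refine eq_of_variableChange_smul_tateNormalForm hb (D := C' * C⁻¹) ?_ ?_ ?_
  · simp only [VariableChange.mul_def, VariableChange.inv_def, hr]
    ring
  · simp only [VariableChange.mul_def, VariableChange.inv_def, hr, ht]
    ring
  · rw [← h, ← h', ← mul_smul, inv_mul_cancel_right]

lemma exists_smul_eq_tateNormalForm {W : WeierstrassCurve K} (h₂ : W.a₂ ≠ 0) (h₃ : W.a₃ ≠ 0)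
    (h₄ : W.a₄ = 0) (h₆ : W.a₆ = 0) :
    ∃ (b c : K) (u : Kˣ), b ≠ 0 ∧ (⟨u, 0, 0, 0⟩ : VariableChange K) • W = tateNormalForm b c := by
  refine ⟨-(W.a₂ ^ 3 / W.a₃ ^ 2), 1 - W.a₁ * W.a₂ / W.a₃, Units.mk0 _ (div_ne_zero h₃ h₂),
    by simp [h₂, h₃], ?_⟩
  ext <;> simp only [variableChange_a₁, variableChange_a₂, variableChange_a₃, variableChange_a₄,
      variableChange_a₆, tateNormalForm, Units.val_inv_eq_inv_val, Units.val_mk0, h₄, h₆] <;>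
    field_simp <;> ring

namespace Affine

variable [DecidableEq K] (W : Affine K)

/-- The change of variables moving `(x, y)` to the origin and its tangent line to `y = 0`. -/
def tangentChange (x y : K) : VariableChange K := ⟨1, x, W.slope x x y y, y⟩

lemma tangentChange_smul_a₂ (x y : K) :
    (W.tangentChange x y • W).a₂ = x - W.addX x x (W.slope x x y y) := by
  rw [variableChange_a₂, addX]
  simp only [tangentChange, inv_one, Units.val_one, one_pow, one_mul]
  ring

lemma tangentChange_smul_a₃ (x y : K) : (W.tangentChange x y • W).a₃ = y - W.negY x y := by
  rw [variableChange_a₃, negY]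
  simp only [tangentChange, inv_one, Units.val_one, one_pow, one_mul]
  ring

lemma tangentChange_smul_a₄ {x y : K} (hy : y ≠ W.negY x y) :
    (W.tangentChange x y • W).a₄ = 0 := by
  have hslope :
      W.slope x x y y * (y - W.negY x y) = 3 * x ^ 2 + 2 * W.a₂ * x + W.a₄ - W.a₁ * y := by
    rw [slope_of_Y_ne rfl hy]
    exact div_mul_cancel₀ _ (sub_ne_zero.mpr hy)
  rw [negY] at hslope
  rw [variableChange_a₄]
  simp only [tangentChange, inv_one, Units.val_one, one_pow, one_mul]
  linear_combination -hslope

lemma tangentChange_smul_a₆ {x y : K} (h : W.Equation x y) :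
    (W.tangentChange x y • W).a₆ = 0 := by
  rw [variableChange_a₆]
  simp only [tangentChange, inv_one, Units.val_one, one_pow, one_mul]
  linear_combination -(W.equation_iff x y).mp h

variable {W}

lemma Point.Y_ne_negY_of_two_nsmul_ne_zero {x y : K} {h : W.Nonsingular x y}
    (h2 : 2 • Point.some x y h ≠ 0) : y ≠ W.negY x y :=
  fun hy => h2 <| by rw [two_nsmul]; exact Point.add_self_of_Y_eq hy

lemma Point.X_ne_addX_of_three_nsmul_ne_zero {x y : K} {h : W.Nonsingular x y}
    (hy : y ≠ W.negY x y) (h3 : 3 • Point.some x y h ≠ 0) :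
    x ≠ W.addX x x (W.slope x x y y) := by
  intro hx
  have h2 : 2 • Point.some x y h = Point.some _ _ (nonsingular_add h h fun hxy => hy hxy.2) := by
    rw [two_nsmul]; exact Point.add_self_of_Y_ne hy
  rcases Point.X_eq_iff.mp hx with hP | hP <;> rw [← h2] at hP
  · rw [two_nsmul] at hP
    exact Point.some_ne_zero h (add_eq_right.mp hP.symm)
  · exact h3 (by rw [succ_nsmul', eq_neg_iff_add_eq_zero.mp hP])

end Affine

end WeierstrassCurve

open WeierstrassCurve Affine

open Classical in
/-- Let `ℓ ≥ 4` and let `K` be a field.  Every `K`-isomorphism class of pairs `(E, P)`, with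
`E` an elliptic curve over `K` (a Weierstrass curve with `Δ ≠ 0`) and `P ∈ E(K)` a torsion
point of order `ℓ`, contains a unique model in Tate normal form: there are unique `c ∈ K` and
`b ∈ K^×` such that `E_{(b,c)}` is nonsingular and `(E, P)` is `K`-isomorphic to
`(E_{(b,c)}, (0,0))`.  Here a `K`-isomorphism `(E, P) ≅ (E', P')` is an admissible change of
variables `(x, y) ↦ (u²x + r, u³y + u²sx + t)` taking `E` to `E'` and `P` to `P'`; it takes
the affine point `P = (x₀, y₀)` to `(0, 0)` exactly when `r = x₀` and `t = y₀`. -/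
theorem tateNormalForm_exists_unique {K : Type*} [Field K] (ℓ : ℕ) (hℓ : 4 ≤ ℓ)
    (E : WeierstrassCurve.Affine K) (hE : E.Δ ≠ 0) (P : E.Point)
    (hP : addOrderOf P = ℓ) :
    ∃! bc : K × K, bc.1 ≠ 0 ∧ (tateNormalForm bc.1 bc.2).Δ ≠ 0 ∧
      ∃ (x₀ y₀ : K) (h : E.Nonsingular x₀ y₀) (C : WeierstrassCurve.VariableChange K),
        P = WeierstrassCurve.Affine.Point.some x₀ y₀ h ∧
        C • E = tateNormalForm bc.1 bc.2 ∧ C.r = x₀ ∧ C.t = y₀ := by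
  have h2 : 2 • P ≠ 0 := nsmul_ne_zero_of_lt_addOrderOf two_ne_zero (by omega)
  have h3 : 3 • P ≠ 0 := nsmul_ne_zero_of_lt_addOrderOf three_ne_zero (by omega)
  rcases P with _ | @⟨x₀, y₀, h⟩
  · exact (h2 (nsmul_zero 2)).elim
  have hy := Point.Y_ne_negY_of_two_nsmul_ne_zero h2
  have hx := Point.X_ne_addX_of_three_nsmul_ne_zero hy h3
  obtain ⟨b, c, u, hb, hC⟩ := exists_smul_eq_tateNormalForm
    (E.tangentChange_smul_a₂ x₀ y₀ ▸ sub_ne_zero.mpr hx)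
    (E.tangentChange_smul_a₃ x₀ y₀ ▸ sub_ne_zero.mpr hy)
    (E.tangentChange_smul_a₄ hy) (E.tangentChange_smul_a₆ h.1)
  set C : VariableChange K := ⟨u, 0, 0, 0⟩ * E.tangentChange x₀ y₀
  have hCE : C • E = tateNormalForm b c := by rw [mul_smul, hC]
  have hCr : C.r = x₀ := by simp [C, VariableChange.mul_def, tangentChange]
  have hCt : C.t = y₀ := by simp [C, VariableChange.mul_def, tangentChange]
  refine ⟨(b, c), ⟨hb, ?_, x₀, y₀, h, C, rfl, hCE, hCr, hCt⟩, ?_⟩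
  · rw [← hCE, variableChange_Δ]
    exact mul_ne_zero (pow_ne_zero _ (Units.ne_zero _)) hE
  · rintro ⟨b', c'⟩ ⟨-, -, x₁, y₁, h₁, C', hP', hC'E, hC'r, hC't⟩
    obtain ⟨rfl, rfl⟩ := Point.some.inj hP'
    obtain ⟨rfl, rfl⟩ := eq_of_smul_eq_tateNormalForm hb (hCr.trans hC'r.symm)
      (hCt.trans hC't.symm) hCE hC'E
    rfl
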